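/- arXiv:2501.17545 — 7 statements merged into one kernel-verified Lean document; each statement's English description precedes it below -/
import Mathlib

section
/- Let G be a finite group with a normal subgroup N and a subgroup H such that G = NH, N ∩ H = {1}, N ≠ {1} and {1} ≠ H < G. Then H ∩ H^g = {1} for all g ∈ G \ H if and only if H acts fixed-point-freely on N by conjugation, i.e., for every h ∈ H with h ≠ 1 and every n ∈ N with n ≠ 1 one has h⁻¹nh ≠ n. -/
open Pointwise

/-- Characterisation of Frobenius groups: with `G = NH`, `N ∩ H = 1`, `N` normal
nontrivial, `H` nontrivial proper, the condition `H ∩ H^g = 1` for all `g ∉ H`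
holds iff `H` acts fixed-point-freely on `N` by conjugation. -/
theorem stmt_2 {G : Type*} [Group G] [Finite G] (N H : Subgroup G) [N.Normal]
    (hN : N ≠ ⊥) (hHbot : H ≠ ⊥) (hHtop : H ≠ ⊤)
    (hprod : ∀ x : G, ∃ n ∈ N, ∃ h ∈ H, x = n * h)
    (hint : N ⊓ H = ⊥) :
    (∀ g : G, g ∉ H → H ⊓ MulAut.conj g⁻¹ • H = ⊥) ↔
      (∀ h ∈ H, h ≠ 1 → ∀ n ∈ N, n ≠ 1 → h⁻¹ * n * h ≠ n) := by
  have mem_conj : ∀ (g x : G), x ∈ MulAut.conj g⁻¹ • H ↔ ∃ y ∈ H, g⁻¹ * y * g = x := by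
    intro g x
    rw [Subgroup.mem_smul_pointwise_iff_exists]
    simp [MulAut.smul_def]
  have triv : ∀ a : G, a ∈ N → a ∈ H → a = 1 := by
    intro a haN haH
    have : a ∈ N ⊓ H := ⟨haN, haH⟩
    rw [hint] at this
    exact this
  constructor
  · intro hcond h hh hne n hn nne heq
    have hnH : n ∉ H := fun hmem => nne (triv n hn hmem)
    have hmem : h ∈ H ⊓ MulAut.conj n⁻¹ • H := by
      refine ⟨hh, (mem_conj n h).mpr ⟨h, hh, ?_⟩⟩
      have : n * h = h * n := by
        have := heq
        group at this ⊢
        calc n * h = h * (h⁻¹ * n * h) := by group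
        _ = h * n := by rw [heq]
      calc n⁻¹ * h * n = n⁻¹ * (h * n) := by group
        _ = n⁻¹ * (n * h) := by rw [this]
        _ = h := by group
    rw [hcond n hnH] at hmem
    exact hne hmem
  · intro hfree g hg
    rw [eq_bot_iff]
    rintro x ⟨hxH, hxC⟩
    obtain ⟨y, hy, hxy⟩ := (mem_conj g x).mp hxC
    obtain ⟨n, hn, h, hh, rfl⟩ := hprod g
    have hnne : n ≠ 1 := by
      rintro rfl
      simp only [one_mul] at hg
      exact hg hh
    -- x = (n*h)⁻¹ * y * (n*h), set z = h * x * h⁻¹ ∈ H, z = n⁻¹ * y * n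
    set z := h * x * h⁻¹ with hz
    have hzH : z ∈ H := H.mul_mem (H.mul_mem hh hxH) (H.inv_mem hh)
    have hzeq : z = n⁻¹ * y * n := by
      rw [hz, ← hxy]; group
    have hyz : y * z⁻¹ ∈ N := by
      have : y * z⁻¹ = y * (n⁻¹ * y⁻¹ * n) := by rw [hzeq]; group
      rw [this]
      have h1 : y * n⁻¹ * y⁻¹ ∈ N := Subgroup.Normal.conj_mem ‹N.Normal› n⁻¹ (N.inv_mem hn) y
      have : y * (n⁻¹ * y⁻¹ * n) = (y * n⁻¹ * y⁻¹) * n := by group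
      rw [this]
      exact N.mul_mem h1 hn
    have hyzH : y * z⁻¹ ∈ H := H.mul_mem hy (H.inv_mem hzH)
    have hyz1 : y = z := by
      have := triv _ hyz hyzH
      rwa [mul_inv_eq_one] at this
    have hcomm : z⁻¹ * n * z = n := by
      rw [hyz1] at hzeq
      have hnz : n * z = z * n := by
        calc n * z = n * (n⁻¹ * z * n) := by rw [← hzeq]
        _ = z * n := by group
      calc z⁻¹ * n * z = z⁻¹ * (n * z) := by group
        _ = z⁻¹ * (z * n) := by rw [hnz]
        _ = n := by group
    have hz1 : z = 1 := by
      by_contra hz1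
      exact hfree z hzH hz1 n hn hnne hcomm
    have : x = 1 := by
      have : h * x * h⁻¹ = 1 := hz1
      have := congrArg (fun a => h⁻¹ * a * h) this
      simpa [mul_assoc] using this
    simp [this]
end

section
/- Let G be a finite group and H a subgroup with 1 < H < G. Then the subgroup D = ⟨Δ⟩ generated by the elements of G lying in no conjugate of H satisfies D·H = G; equivalently, D acts transitively on the set of right cosets of H in G. -/
open Pointwise

private lemma mem_conj_smul' {G : Type*} [Group G] (H : Subgroup G) (g y : G) :
    y ∈ MulAut.conj g⁻¹ • H ↔ g * y * g⁻¹ ∈ H := by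
  rw [Subgroup.mem_pointwise_smul_iff_inv_smul_mem, ← map_inv, inv_inv, MulAut.smul_def,
    MulAut.conj_apply]

private lemma closure_normal_of_conj {G : Type*} [Group G] {s : Set G}
    (hs : ∀ y ∈ s, ∀ g : G, g * y * g⁻¹ ∈ s) : (Subgroup.closure s).Normal := by
  constructor
  intro n hn g
  refine Subgroup.closure_induction (fun x hx => Subgroup.subset_closure (hs x hx g)) ?_
    (fun x y _ _ ihx ihy => ?_) (fun x _ ihx => ?_) hn
  · simpa using (Subgroup.closure s).one_mem
  · have : g * (x * y) * g⁻¹ = (g * x * g⁻¹) * (g * y * g⁻¹) := by group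
    rw [this]; exact mul_mem ihx ihy
  · have : g * x⁻¹ * g⁻¹ = (g * x * g⁻¹)⁻¹ := by group
    rw [this]; exact inv_mem ihx

/-- Jordan: a proper subgroup's conjugates do not cover a finite group. -/
private lemma jordan {G : Type*} [Group G] [Finite G] (K : Subgroup G) (hK : K ≠ ⊤) :
    ∃ y : G, ∀ g : G, g * y * g⁻¹ ∉ K := by
  classical
  cases nonempty_fintype G
  by_contra hcon
  push_neg at hcon
  set β := G ⧸ K
  letI : Fintype β := Fintype.ofFinite β
  letI : ∀ a : G, Fintype (MulAction.fixedBy β a) := fun a => Fintype.ofFinite _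
  letI : Fintype (Quotient <| MulAction.orbitRel G β) := Fintype.ofFinite _
  have hburn := MulAction.sum_card_fixedBy_eq_card_orbits_mul_card_group G β
  -- the action is transitive, so there is one orbit
  have hΩ : Fintype.card (Quotient <| MulAction.orbitRel G β) = 1 := by
    obtain ⟨u⟩ := (MulAction.pretransitive_iff_unique_quotient_of_nonempty G β).mp inferInstance
    exact Fintype.card_eq_one_iff.mpr ⟨u.default, fun a => u.uniq a⟩
  rw [hΩ, one_mul] at hburn
  -- every element has a fixed point
  have hfix : ∀ a : G, 1 ≤ Fintype.card (MulAction.fixedBy β a) := by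
    intro a
    obtain ⟨g, hg⟩ := hcon a
    refine Fintype.card_pos_iff.mpr ⟨⟨QuotientGroup.mk g⁻¹, ?_⟩⟩
    show a • (QuotientGroup.mk g⁻¹ : β) = QuotientGroup.mk g⁻¹
    rw [show a • (QuotientGroup.mk g⁻¹ : β) = QuotientGroup.mk (a * g⁻¹) from rfl,
      QuotientGroup.eq]
    have : (a * g⁻¹)⁻¹ * g⁻¹ = (g * a * g⁻¹)⁻¹ := by group
    rw [this]
    exact inv_mem hg
  -- the identity fixes at least two points
  have h2 : 2 ≤ Fintype.card (MulAction.fixedBy β (1 : G)) := by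
    obtain ⟨x, hx⟩ : ∃ x : G, x ∉ K :=
      not_forall.mp fun h => hK ((Subgroup.eq_top_iff' K).mpr h)
    have hne : (QuotientGroup.mk x : β) ≠ QuotientGroup.mk 1 := by
      rw [Ne, QuotientGroup.eq]
      simpa using fun h => hx (by simpa using inv_mem h)
    have : Nontrivial (MulAction.fixedBy β (1 : G)) := by
      refine ⟨⟨⟨QuotientGroup.mk x, by simp [MulAction.mem_fixedBy]⟩,
        ⟨QuotientGroup.mk 1, by simp [MulAction.mem_fixedBy]⟩, ?_⟩⟩
      simpa using hne
    exact Fintype.one_lt_card_iff_nontrivial.mpr this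
  -- counting
  rw [← Finset.add_sum_erase Finset.univ _ (Finset.mem_univ (1 : G))] at hburn
  have hrest := Finset.card_nsmul_le_sum (Finset.univ.erase (1 : G))
    (fun a => Fintype.card (MulAction.fixedBy β a)) 1 (fun a _ => hfix a)
  simp only [smul_eq_mul, mul_one] at hrest
  have hcard : (Finset.univ.erase (1 : G)).card = Fintype.card G - 1 := by
    simp [Finset.card_erase_of_mem]
  have hpos : 1 ≤ Fintype.card G := Fintype.card_pos
  omega

/-- The derangements subgroup `D = ⟨Δ⟩`, generated by the elements lying in no
conjugate of `H`, satisfies `D·H = G`. -/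
theorem stmt_3 {G : Type*} [Group G] [Finite G] (H : Subgroup G)
    (hbot : H ≠ ⊥) (htop : H ≠ ⊤) :
    ∀ x : G, ∃ d ∈ Subgroup.closure {y : G | ∀ g : G, y ∉ MulAut.conj g⁻¹ • H},
      ∃ h ∈ H, x = d * h := by
  set Δ : Set G := {y : G | ∀ g : G, y ∉ MulAut.conj g⁻¹ • H} with hΔ
  set D := Subgroup.closure Δ with hD
  haveI hnorm : D.Normal := by
    apply closure_normal_of_conj
    intro y hy g g'
    intro hmem
    rw [mem_conj_smul'] at hmem
    refine hy (g' * g) ?_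
    rw [mem_conj_smul']
    have : g' * (g * y * g⁻¹) * g'⁻¹ = g' * g * y * (g' * g)⁻¹ := by group
    rw [← this]; exact hmem
  have htopK : D ⊔ H = ⊤ := by
    by_contra hne
    obtain ⟨y, hy⟩ := jordan (D ⊔ H) hne
    have hyΔ : y ∈ Δ := by
      intro g hmem
      rw [mem_conj_smul'] at hmem
      exact hy g (Subgroup.mem_sup_right hmem)
    have : y ∈ D ⊔ H := Subgroup.mem_sup_left (Subgroup.subset_closure hyΔ)
    have hy1 : y ∉ D ⊔ H := by simpa using hy 1
    exact hy1 this
  intro x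
  have hx : x ∈ ((D : Set G) * (H : Set G)) := by
    rw [← Subgroup.normal_mul, htopK]
    simp
  obtain ⟨d, hd, h, hh, rfl⟩ := hx
  exact ⟨d, hd, h, hh, rfl⟩
end

section
/- Let G be a finite group and H a subgroup with 1 < H < G. Then W ≤ D, where D is the subgroup generated by the elements lying in no conjugate of H and W is the normal closure in G of the subgroup U = ⟨H ∩ H^g : g ∈ G \ H⟩. -/
/-!
`D` is normal and every element outside `D` lies in a conjugate of `H`. Count the pairs `(k, y)`
with `y ∉ D` and `y ∈ H^k`. Each conjugate contributes `|H \ D|` such `y`, so there are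
`|G| · |H \ D|` pairs. Each `y ∉ D` lies in `H^k` for a whole left coset `kH` of indices `k`, so
there are at least `|H| · |G \ D|` pairs. If some `x ∈ H ∩ H^g` with `g ∉ H` lay outside `D`, the
two cosets `H` and `gH` would make the count strictly larger, giving
`|G| · |H \ D| > |H| · |G \ D|`; but `|HD| ≤ |G|` says exactly the opposite inequality.
-/

open Pointwise Finset

namespace Subgroup

variable {G : Type*} [Group G]

theorem mem_conj_smul_iff {H : Subgroup G} {k y : G} :
    y ∈ MulAut.conj k • H ↔ k⁻¹ * y * k ∈ H := by
  simp [mem_pointwise_smul_iff_inv_smul_mem, MulAut.smul_def]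

theorem closure_normal_of_conj_mem {s : Set G} (hs : ∀ c, ∀ y ∈ s, c * y * c⁻¹ ∈ s) :
    (closure s).Normal := by
  have hconj : Group.conjugatesOfSet s ⊆ s := fun x hx => by
    obtain ⟨a, ha, hax⟩ := Group.mem_conjugatesOfSet_iff.mp hx
    obtain ⟨c, rfl⟩ := isConj_iff.mp hax
    exact hs c a ha
  rw [le_antisymm closure_le_normalClosure (closure_mono hconj)]
  infer_instance

theorem card_mul_card_le_card_mul_card_inf [Finite G] (H K : Subgroup G) :
    Nat.card H * Nat.card K ≤ Nat.card G * Nat.card ↥(H ⊓ K) := by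
  have hK : Nat.card ↥(H ⊓ K) * H.relIndex K = Nat.card K := by
    rw [← relIndex_bot_left, ← relIndex_bot_left, ← inf_relIndex_right H K]
    exact relIndex_mul_relIndex _ _ _ bot_le inf_le_right
  have hle : H.relIndex K ≤ H.index := by
    simpa using relIndex_le_of_le_right (le_top : K ≤ ⊤) (by simpa using index_ne_zero_of_finite)
  calc Nat.card H * Nat.card K = Nat.card ↥(H ⊓ K) * (Nat.card H * H.relIndex K) := by
        rw [← hK]; ring
    _ ≤ Nat.card ↥(H ⊓ K) * (Nat.card H * H.index) := by gcongr
    _ = _ := by rw [card_mul_index, mul_comm]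

theorem ncard_conj_smul_sdiff (H D : Subgroup G) [D.Normal] (k : G) :
    ((MulAut.conj k • H : Subgroup G) \ D : Set G).ncard = ((H : Set G) \ D).ncard := by
  have hD : ((MulAut.conj k • D : Subgroup G) : Set G) = D := by rw [Normal.conj_smul_eq_self]
  nth_rewrite 1 [← hD]
  rw [coe_pointwise_smul, coe_pointwise_smul, ← Set.smul_set_sdiff, Set.ncard_smul_set]

theorem smul_subset_setOf_mem_conj_smul {H : Subgroup G} {y k : G}
    (hk : y ∈ MulAut.conj k • H) : k • (H : Set G) ⊆ {c | y ∈ MulAut.conj c • H} := by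
  rintro _ ⟨a, ha, rfl⟩
  simpa [map_mul, mul_smul, conj_smul_eq_self_of_mem ha] using hk

theorem card_le_ncard_setOf_mem_conj_smul [Finite G] {H : Subgroup G} {y k : G}
    (hk : y ∈ MulAut.conj k • H) : Nat.card H ≤ {c : G | y ∈ MulAut.conj c • H}.ncard :=
  calc Nat.card H = (k • (H : Set G)).ncard := by
        rw [Set.ncard_smul_set, ← SetLike.coe_sort_coe, Nat.card_coe_set_eq]
    _ ≤ _ := Set.ncard_le_ncard (smul_subset_setOf_mem_conj_smul hk)

theorem two_mul_card_le_ncard_setOf_mem_conj_smul [Finite G] {H : Subgroup G} {x g : G}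
    (hx : x ∈ H) (hg : g ∉ H) (hxg : x ∈ MulAut.conj g • H) :
    2 * Nat.card H ≤ {c : G | x ∈ MulAut.conj c • H}.ncard := by
  have hdisj : Disjoint (H : Set G) (g • (H : Set G)) := by
    refine Set.disjoint_left.mpr ?_
    rintro _ hga ⟨a, ha, rfl⟩
    exact hg (by simpa using mul_mem hga (inv_mem ha))
  have hx1 : x ∈ MulAut.conj (1 : G) • H := by simpa using hx
  calc 2 * Nat.card H = ((H : Set G) ∪ g • (H : Set G)).ncard := by
        rw [Set.ncard_union_eq hdisj, Set.ncard_smul_set, ← SetLike.coe_sort_coe,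
          Nat.card_coe_set_eq, two_mul]
    _ ≤ _ := Set.ncard_le_ncard <| Set.union_subset
        (by simpa using smul_subset_setOf_mem_conj_smul hx1)
        (smul_subset_setOf_mem_conj_smul hxg)

theorem card_mul_ncard_sdiff_eq_sum [Fintype G] (H D : Subgroup G) [D.Normal]
    [DecidablePred (· ∈ D)] :
    Fintype.card G * ((H : Set G) \ D).ncard =
      ∑ y ∈ ({y | y ∉ D} : Finset G), {c : G | y ∈ MulAut.conj c • H}.ncard := by
  classical
  let r : G → G → Prop := fun k y => y ∈ MulAut.conj k • H
  have habove (k : G) :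
      #(({y | y ∉ D} : Finset G).bipartiteAbove r k) = ((H : Set G) \ D).ncard := by
    rw [← ncard_conj_smul_sdiff H D k, ← Set.ncard_coe_finset, coe_bipartiteAbove]
    congr 1; ext y
    simp only [r, Set.mem_ofPred_eq, Set.mem_sdiff, SetLike.mem_coe, mem_filter, mem_univ,
      true_and, and_comm]
  have hbelow (y : G) : #(univ.bipartiteBelow r y) = {c : G | y ∈ MulAut.conj c • H}.ncard := by
    rw [← Set.ncard_coe_finset, coe_bipartiteBelow]
    simp only [mem_univ, true_and, r]
  have := sum_card_bipartiteAbove_eq_sum_card_bipartiteBelow r (s := univ)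
    (t := ({y | y ∉ D} : Finset G))
  simpa only [habove, hbelow, sum_const, card_univ, smul_eq_mul] using this

theorem inf_conj_smul_le_of_forall_notMem [Finite G] {H D : Subgroup G} [D.Normal]
    (hcover : ∀ y ∉ D, ∃ k : G, y ∈ MulAut.conj k • H) {g : G} (hg : g ∉ H) :
    H ⊓ MulAut.conj g • H ≤ D := by
  classical
  have := Fintype.ofFinite G
  intro x hxH
  obtain ⟨hx, hxg⟩ := mem_inf.mp hxH
  by_contra hxD
  set t : Finset G := {y | y ∉ D}
  have hxt : x ∈ t := by simpa [t] using hxD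
  have hlower :
      #t * Nat.card H + Nat.card H ≤ ∑ y ∈ t, {c : G | y ∈ MulAut.conj c • H}.ncard := by
    rw [← add_sum_erase t _ hxt, ← card_erase_add_one hxt]
    have hx2 := two_mul_card_le_ncard_setOf_mem_conj_smul hx hg hxg
    have hrest := card_nsmul_le_sum (t.erase x) _ (Nat.card H) fun y hy => by
      obtain ⟨k, hk⟩ := hcover y (by simpa [t] using mem_of_mem_erase hy)
      exact card_le_ncard_setOf_mem_conj_smul hk
    rw [smul_eq_mul] at hrest
    linarith
  have hsplit : ((H : Set G) \ D).ncard + Nat.card ↥(H ⊓ D) = Nat.card H := by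
    rw [← SetLike.coe_sort_coe, ← SetLike.coe_sort_coe H, Nat.card_coe_set_eq,
      Nat.card_coe_set_eq, coe_inf, add_comm, Set.ncard_inter_add_ncard_sdiff_eq_ncard]
  have hcompl : #t + Nat.card D = Nat.card G := by
    have ht : (t : Set G) = (D : Set G)ᶜ := by ext; simp [t]
    rw [← Set.ncard_coe_finset, ht, add_comm, ← Set.ncard_add_ncard_compl (D : Set G),
      ← SetLike.coe_sort_coe, Nat.card_coe_set_eq]
  have hcount := card_mul_ncard_sdiff_eq_sum H D
  rw [← Nat.card_eq_fintype_card] at hcount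
  have hprod := card_mul_card_le_card_mul_card_inf H D
  have hH : 0 < Nat.card H := Nat.card_pos
  nlinarith

end Subgroup

theorem stmt_4_general {G : Type*} [Group G] [Finite G] (H : Subgroup G) :
    Subgroup.normalClosure
        ((Subgroup.closure (⋃ g ∈ {g : G | g ∉ H},
          ((H ⊓ MulAut.conj g⁻¹ • H : Subgroup G) : Set G))) : Set G) ≤
      Subgroup.closure {y : G | ∀ g : G, y ∉ MulAut.conj g⁻¹ • H} := by
  set Δ := {y : G | ∀ g : G, y ∉ MulAut.conj g⁻¹ • H}
  have hΔ : ∀ c, ∀ y ∈ Δ, c * y * c⁻¹ ∈ Δ := fun c y hy k hk => hy (k * c) <| by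
    rw [Subgroup.mem_conj_smul_iff] at hk ⊢
    simpa [mul_assoc] using hk
  have := Subgroup.closure_normal_of_conj_mem hΔ
  refine Subgroup.normalClosure_le_normal ?_
  rw [SetLike.coe_subset_coe, Subgroup.closure_le, Set.iUnion₂_subset_iff]
  intro g hg
  refine Subgroup.inf_conj_smul_le_of_forall_notMem (fun y hy => ?_) (inv_mem_iff.not.mpr hg)
  by_contra! h
  exact hy (Subgroup.subset_closure fun k => h k⁻¹)

/-- `W ≤ D`, where `D` is generated by the elements in no conjugate of `H` and
`W` is the normal closure of `U = ⟨H ∩ H^g : g ∉ H⟩`. -/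
theorem stmt_4 {G : Type*} [Group G] [Finite G] (H : Subgroup G)
    (hbot : H ≠ ⊥) (htop : H ≠ ⊤) :
    Subgroup.normalClosure
        ((Subgroup.closure (⋃ g ∈ {g : G | g ∉ H},
          ((H ⊓ MulAut.conj g⁻¹ • H : Subgroup G) : Set G))) : Set G) ≤
      Subgroup.closure {y : G | ∀ g : G, y ∉ MulAut.conj g⁻¹ • H} :=
  stmt_4_general H
end

section
/- Let H be a finite p-group and H* a proper normal subgroup of H. If there exists a nonzero finite-dimensional complex representation M of H such that every element of H fixing some nonzero vector of M lies in H*, then there exist a subgroup C of H and a normal subgroup E of C with C/E cyclic such that every element x ∈ H \ H* has a power x^n lying in C \ E. -/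
/-!
Induction on `dim M`. If every element of `H` acts by a scalar, the scalar character of `H`
itself works, with `C = H`. Otherwise let `S` be the normal subgroup of scalar elements. As
`H ⧸ S` is a nontrivial `p`-group it has a nontrivial central element `tS`, and the normal
subgroup `A` generated by `t` and `S` acts through scalar multiples of powers of `ρ t`, so an
eigenvector of `ρ t` spans an `A`-stable line on which `A` acts by a character `μ`. The
`μ`-eigenspace `N` of `A` is a proper subspace (`t` is not scalar), stable under the inertia
group `I` of `μ`. If `x` fixes no nonzero vector and `x ^ n` is the least positive power in `I`,
then `x ^ n` fixes no nonzero vector of `N`: for `w ∈ N` fixed by `x ^ n`, the vector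
`∑_{i<n} x ^ i w` is fixed by `x`, hence zero, while its summands lie in eigenspaces of `A`
for the pairwise distinct characters `μ ∘ conj(x ^ -i)`. Induction applied to `I` acting on
`N` now gives the character.
-/

theorem Subgroup.normal_zpowers_of_mem_center {G : Type*} [Group G] {z : G}
    (hz : z ∈ Subgroup.center G) : (Subgroup.zpowers z).Normal :=
  ⟨fun a ha g => by
    rwa [Subgroup.mem_center_iff.mp (Subgroup.zpowers_le.mpr hz ha) g, mul_inv_cancel_right]⟩

theorem IsPGroup.exists_normal_cyclic_extension {p : ℕ} [Fact p.Prime] {G : Type*} [Group G]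
    [Finite G] (hG : IsPGroup p G) {S : Subgroup G} [S.Normal] (hS : S ≠ ⊤) :
    ∃ t ∉ S, ∃ A : Subgroup G, A.Normal ∧ t ∈ A ∧ ∀ a ∈ A, ∃ k : ℕ, (t ^ k)⁻¹ * a ∈ S := by
  have : Nontrivial (G ⧸ S) := QuotientGroup.nontrivial_iff.mpr hS
  have := (hG.to_quotient S).center_nontrivial
  obtain ⟨⟨z, hz⟩, hz1⟩ := exists_ne (1 : Subgroup.center (G ⧸ S))
  obtain ⟨t, rfl⟩ := QuotientGroup.mk_surjective z
  have := Subgroup.normal_zpowers_of_mem_center hz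
  refine ⟨t, fun ht => hz1 (Subtype.ext ((QuotientGroup.eq_one_iff t).mpr ht)),
    (Subgroup.zpowers (t : G ⧸ S)).comap (QuotientGroup.mk' S), inferInstance,
    Subgroup.mem_zpowers _, fun a ha => ?_⟩
  obtain ⟨k, hk⟩ := mem_powers_iff_mem_zpowers.mpr ha
  exact ⟨k, QuotientGroup.eq.mp (by simpa using hk)⟩

theorem Subgroup.exists_monoidHom_map_subtype {G M : Type*} [Group G] [Monoid M]
    {K : Subgroup G} {C : Subgroup K} (χ : C →* M) :
    ∃ χ' : C.map K.subtype →* M, ∀ y (hy : y ∈ C),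
      χ' ⟨y, Subgroup.mem_map_of_mem _ hy⟩ = χ ⟨y, hy⟩ :=
  ⟨χ.comp (C.equivMapOfInjective _ K.subtype_injective).symm.toMonoidHom, fun _ _ =>
    congrArg χ ((MulEquiv.symm_apply_eq _).mpr rfl)⟩

theorem Module.End.eq_zero_of_sum_eq_zero_of_apply_eq_smul {K V ι T : Type*} [Field K]
    [AddCommGroup V] [Module K V] [DecidableEq ι] {f : T → Module.End K V} {χ : ι → T → K}
    {w : ι → V} {s : Finset ι} {i₀ : ι} (hi₀ : i₀ ∈ s)
    (hw : ∀ i ∈ s, ∀ a, f a (w i) = χ i a • w i) (hχ : ∀ i ∈ s, i ≠ i₀ → χ i ≠ χ i₀)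
    (hsum : ∑ i ∈ s, w i = 0) : w i₀ = 0 := by
  induction s using Finset.strongInduction generalizing w with
  | H s ih =>
  by_cases hs : s = {i₀}
  · simpa [hs] using hsum
  obtain ⟨j, hjs, hji₀⟩ : ∃ j ∈ s, j ≠ i₀ := by
    by_contra! h
    exact hs (Finset.eq_singleton_iff_unique_mem.mpr ⟨hi₀, h⟩)
  obtain ⟨a, ha⟩ := Function.ne_iff.mp (hχ j hjs hji₀)
  have key := ih (s.erase j) (Finset.erase_ssubset hjs) (Finset.mem_erase.mpr ⟨hji₀.symm, hi₀⟩)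
    (w := fun i => (χ i a - χ j a) • w i)
    (fun i hi b => by
      rw [map_smul, hw i (Finset.mem_of_mem_erase hi), smul_comm])
    (fun i hi => hχ i (Finset.mem_of_mem_erase hi))
    (by
      rw [Finset.sum_erase _ (by simp)]
      calc ∑ i ∈ s, (χ i a - χ j a) • w i = f a (∑ i ∈ s, w i) - χ j a • ∑ i ∈ s, w i := by
            simp only [map_sum, Finset.smul_sum, ← Finset.sum_sub_distrib, sub_smul]
            exact Finset.sum_congr rfl fun i hi => by rw [hw i hi]
        _ = 0 := by simp [hsum])
  exact (smul_eq_zero.mp key).resolve_left (sub_ne_zero.mpr (Ne.symm ha))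

def MonoidHom.inertiaGroup {G M : Type*} [Group G] [MulOneClass M] {A : Subgroup G} [A.Normal]
    (μ : A →* M) : Subgroup G where
  carrier := {g | ∀ a, μ (MulAut.conjNormal g a) = μ a}
  one_mem' a := by rw [map_one, MulAut.one_apply]
  mul_mem' {g h} hg hh a := by rw [map_mul, MulAut.mul_apply, hg, hh]
  inv_mem' {g} hg a := by
    rw [← hg, ← MulAut.mul_apply, ← map_mul, mul_inv_cancel, map_one, MulAut.one_apply]

namespace Representation

variable {k G V : Type*} [Field k] [Group G] [AddCommGroup V] [Module k V]

def IsFixedPointFree (ρ : Representation k G V) (g : G) : Prop :=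
  ∀ v, ρ g v = v → v = 0

def scalarSubgroup (ρ : Representation k G V) : Subgroup G :=
  (Units.map (algebraMap k (Module.End k V) : k →* Module.End k V)).range.comap ρ.asGroupHom

theorem mem_scalarSubgroup {ρ : Representation k G V} {g : G} :
    g ∈ ρ.scalarSubgroup ↔ ∃ c : kˣ, ∀ v, ρ g v = (c : k) • v := by
  simp [scalarSubgroup, Units.ext_iff, LinearMap.ext_iff, asGroupHom_apply, eq_comm]

instance normal_scalarSubgroup (ρ : Representation k G V) : ρ.scalarSubgroup.Normal :=
  ⟨fun h hh g => by
    obtain ⟨c, hc⟩ := mem_scalarSubgroup.mp hh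
    refine mem_scalarSubgroup.mpr ⟨c, fun v => ?_⟩
    rw [map_mul, map_mul, Module.End.mul_apply, Module.End.mul_apply, hc, map_smul,
      ← Module.End.mul_apply, ← map_mul, mul_inv_cancel, map_one, Module.End.one_apply]⟩

theorem exists_monoidHom_of_forall_apply_eq_smul (ρ : Representation k G V) {v : V}
    (hv : v ≠ 0) (h : ∀ g, ∃ c : k, ρ g v = c • v) :
    ∃ χ : G →* kˣ, ∀ g, ρ g v = (χ g : k) • v := by
  choose c hc using h
  have hinj := smul_left_injective k hv
  let χ : G →* k :=
    { toFun := c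
      map_one' := hinj (by simp only [← hc, map_one, Module.End.one_apply, one_smul])
      map_mul' := fun g h => hinj <| show c (g * h) • v = (c g * c h) • v by
        rw [← hc, map_mul, Module.End.mul_apply, hc, map_smul, hc, smul_smul, mul_comm] }
  exact ⟨χ.toHomUnits, hc⟩

theorem apply_sum_range_pow_apply_eq_self (ρ : Representation k G V) {x : G} {w : V} {n : ℕ}
    (h : ρ (x ^ n) w = w) :
    ρ x (∑ i ∈ Finset.range n, ρ (x ^ i) w) = ∑ i ∈ Finset.range n, ρ (x ^ i) w := by
  have hsucc : ∀ i, ρ x (ρ (x ^ i) w) = ρ (x ^ (i + 1)) w := fun i => by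
    rw [pow_succ', map_mul, Module.End.mul_apply]
  rw [map_sum, Finset.sum_congr rfl fun i _ => hsucc i]
  refine add_right_cancel (b := ρ (x ^ 0) w) ?_
  rw [← Finset.sum_range_succ' (fun i => ρ (x ^ i) w), Finset.sum_range_succ, pow_zero, map_one,
    Module.End.one_apply, h]

variable {A : Subgroup G}

def weightSpace (ρ : Representation k G V) (μ : A →* kˣ) : Submodule k V :=
  ⨅ a : A, Module.End.eigenspace (ρ a) (μ a)

theorem mem_weightSpace {ρ : Representation k G V} {μ : A →* kˣ} {w : V} :
    w ∈ ρ.weightSpace μ ↔ ∀ a : A, ρ a w = (μ a : k) • w := by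
  simp [weightSpace]

theorem apply_mem_weightSpace_comp_conjNormal [A.Normal] {ρ : Representation k G V}
    {μ : A →* kˣ} {w : V} (hw : w ∈ ρ.weightSpace μ) (g : G) :
    ρ g w ∈ ρ.weightSpace (μ.comp (MulAut.conjNormal g⁻¹).toMonoidHom) := by
  refine mem_weightSpace.mpr fun a => ?_
  have hconj : (a : G) * g = g * (MulAut.conjNormal g⁻¹ a : A) := by simp [mul_assoc]
  rw [MonoidHom.comp_apply, MulEquiv.coe_toMonoidHom, ← map_smul, ← mem_weightSpace.mp hw,
    ← Module.End.mul_apply, ← map_mul, hconj, map_mul, Module.End.mul_apply]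

theorem apply_mem_weightSpace_of_mem_inertiaGroup [A.Normal] {ρ : Representation k G V}
    {μ : A →* kˣ} {w : V} (hw : w ∈ ρ.weightSpace μ) {g : G} (hg : g ∈ μ.inertiaGroup) :
    ρ g w ∈ ρ.weightSpace μ := by
  have := apply_mem_weightSpace_comp_conjNormal hw g
  rwa [show μ.comp (MulAut.conjNormal g⁻¹).toMonoidHom = μ from
    MonoidHom.ext (μ.inertiaGroup.inv_mem hg)] at this

theorem IsFixedPointFree.exists_pow_mem_inertiaGroup [Finite G] [A.Normal]
    {ρ : Representation k G V} {x : G} (hx : ρ.IsFixedPointFree x) (μ : A →* kˣ) :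
    ∃ n, 0 < n ∧ x ^ n ∈ μ.inertiaGroup ∧
      ∀ w ∈ ρ.weightSpace μ, ρ (x ^ n) w = w → w = 0 := by
  classical
  have hex : ∃ n, 0 < n ∧ x ^ n ∈ μ.inertiaGroup :=
    ⟨orderOf x, orderOf_pos x, by rw [pow_orderOf_eq_one]; exact one_mem _⟩
  refine ⟨Nat.find hex, (Nat.find_spec hex).1, (Nat.find_spec hex).2, fun w hw hfix => ?_⟩
  have horbit := hx _ (ρ.apply_sum_range_pow_apply_eq_self hfix)
  have hw0 := Module.End.eq_zero_of_sum_eq_zero_of_apply_eq_smul (f := fun a : A => ρ a)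
    (χ := fun i a => (μ (MulAut.conjNormal (x ^ i)⁻¹ a) : k))
    (Finset.mem_range.mpr (Nat.find_spec hex).1)
    (fun i _ => mem_weightSpace.mp (apply_mem_weightSpace_comp_conjNormal hw (x ^ i)))
    (fun i hi hi0 hχ => Nat.find_min hex (Finset.mem_range.mp hi)
      ⟨Nat.pos_of_ne_zero hi0, inv_mem_iff.mp fun a => Units.ext (by simpa using congrFun hχ a)⟩)
    horbit
  simpa using hw0

theorem exists_subrepresentation_of_scalarSubgroup_ne_top {p : ℕ} [Fact p.Prime] [IsAlgClosed k]
    [Finite G] [FiniteDimensional k V] [Nontrivial V] (hG : IsPGroup p G)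
    (ρ : Representation k G V) (hS : ρ.scalarSubgroup ≠ ⊤) :
    ∃ (K : Subgroup G) (N : Subrepresentation (ρ.comp K.subtype)),
      N.toSubmodule ≠ ⊥ ∧ N.toSubmodule ≠ ⊤ ∧ ∀ x, ρ.IsFixedPointFree x →
        ∃ n, 0 < n ∧ ∃ h : x ^ n ∈ K, N.toRepresentation.IsFixedPointFree ⟨x ^ n, h⟩ := by
  obtain ⟨t, htS, A, hA, htA, hA_pow⟩ := hG.exists_normal_cyclic_extension hS
  obtain ⟨c, hc⟩ := Module.End.exists_eigenvalue (ρ t)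
  obtain ⟨v, hv⟩ := hc.exists_hasEigenvector
  have hv_common : ∀ a : A, ∃ d : k, ρ a v = d • v := fun a => by
    obtain ⟨m, hm⟩ := hA_pow a a.2
    obtain ⟨d, hd⟩ := mem_scalarSubgroup.mp hm
    refine ⟨d * c ^ m, ?_⟩
    rw [← mul_inv_cancel_left (t ^ m) (a : G), map_mul, Module.End.mul_apply, hd, map_smul,
      map_pow, hv.pow_apply, smul_smul]
  obtain ⟨μ, hμ⟩ := exists_monoidHom_of_forall_apply_eq_smul (ρ.comp A.subtype) hv.2 hv_common
  refine ⟨μ.inertiaGroup, ⟨ρ.weightSpace μ, fun g w hw =>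
    apply_mem_weightSpace_of_mem_inertiaGroup hw g.2⟩, ?_, ?_, ?_⟩
  · exact (Submodule.ne_bot_iff _).mpr ⟨v, mem_weightSpace.mpr hμ, hv.2⟩
  · intro htop
    replace htop : ρ.weightSpace μ = ⊤ := htop
    refine htS (mem_scalarSubgroup.mpr ⟨μ ⟨t, htA⟩, fun w => ?_⟩)
    exact mem_weightSpace.mp (htop ▸ Submodule.mem_top : w ∈ ρ.weightSpace μ) ⟨t, htA⟩
  · intro x hx
    obtain ⟨n, hn, hxn, hfix⟩ := hx.exists_pow_mem_inertiaGroup μ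
    exact ⟨n, hn, hxn, fun w hw => Subtype.ext (hfix w w.2 (congrArg Subtype.val hw))⟩

theorem exists_character_pow_ne_one_of_isPGroup {p : ℕ} [Fact p.Prime] [IsAlgClosed k]
    [Finite G] [FiniteDimensional k V] [Nontrivial V] (hG : IsPGroup p G)
    (ρ : Representation k G V) :
    ∃ (C : Subgroup G) (χ : C →* kˣ), ∀ x, ρ.IsFixedPointFree x →
      ∃ n, 0 < n ∧ ∃ h : x ^ n ∈ C, χ ⟨x ^ n, h⟩ ≠ 1 := by
  induction hd : Module.finrank k V using Nat.strong_induction_on generalizing G V with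
  | _ d ih =>
  by_cases hS : ρ.scalarSubgroup = ⊤
  · obtain ⟨v, hv⟩ := exists_ne (0 : V)
    obtain ⟨χ, hχ⟩ := exists_monoidHom_of_forall_apply_eq_smul ρ hv fun g => by
      obtain ⟨c, hc⟩ := mem_scalarSubgroup.mp (hS ▸ Subgroup.mem_top g)
      exact ⟨c, hc v⟩
    refine ⟨⊤, χ.comp (⊤ : Subgroup G).subtype, fun x hx =>
      ⟨1, one_pos, Subgroup.mem_top _, fun h1 => hv (hx v ?_)⟩⟩
    have h1 : χ x = 1 := by simpa using h1
    rw [hχ, h1, Units.val_one, one_smul]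
  · obtain ⟨K, N, hbot, htop, hred⟩ := exists_subrepresentation_of_scalarSubgroup_ne_top hG ρ hS
    have : Nontrivial N.toSubmodule := Submodule.nontrivial_iff_ne_bot.mpr hbot
    obtain ⟨C, χ, hC⟩ := ih _ (hd ▸ Submodule.finrank_lt htop) (hG.to_subgroup K)
      N.toRepresentation rfl
    obtain ⟨χ', hχ'⟩ := Subgroup.exists_monoidHom_map_subtype χ
    refine ⟨C.map K.subtype, χ', fun x hx => ?_⟩
    obtain ⟨n, hn, hxK, hfix⟩ := hred x hx
    obtain ⟨m, hm, hmem, hne⟩ := hC _ hfix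
    refine ⟨n * m, mul_pos hn hm, ?_⟩
    rw [pow_mul]
    exact ⟨Subgroup.mem_map_of_mem _ hmem, hχ' _ hmem ▸ hne⟩

end Representation

theorem stmt_11_general {p : ℕ} (hp : p.Prime) {H : Type*} [Group H] [Finite H]
    (hpH : IsPGroup p H) (Hstar : Subgroup H)
    (M : Type*) [AddCommGroup M] [Module ℂ M] [FiniteDimensional ℂ M] [Nontrivial M]
    (ρ : Representation ℂ H M)
    (hfix : ∀ h : H, (∃ v : M, v ≠ 0 ∧ ρ h v = v) → h ∈ Hstar) :
    ∃ C : Subgroup H, ∃ E : Subgroup H, E ≤ C ∧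
      ∃ hn : (E.subgroupOf C).Normal,
        (letI := hn; IsCyclic (C ⧸ E.subgroupOf C)) ∧
        ∀ x : H, x ∉ Hstar → ∃ n : ℕ, 0 < n ∧ x ^ n ∈ C ∧ x ^ n ∉ E := by
  have := Fact.mk hp
  obtain ⟨C, χ, hC⟩ := Representation.exists_character_pow_ne_one_of_isPGroup hpH ρ
  refine ⟨C, χ.ker.map C.subtype, Subgroup.map_subtype_le _, ?_⟩
  rw [show (χ.ker.map C.subtype).subgroupOf C = χ.ker from
    Subgroup.comap_map_eq_self_of_injective C.subtype_injective _]
  refine ⟨inferInstance,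
    isCyclic_of_injective_ringHom ((Units.coeHom ℂ).comp (QuotientGroup.kerLift χ))
      (Units.val_injective.comp (QuotientGroup.kerLift_injective χ)), fun x hx => ?_⟩
  obtain ⟨n, hn, hxC, hχx⟩ := hC x fun v hv => by_contra fun hv0 => hx (hfix x ⟨v, hv0, hv⟩)
  refine ⟨n, hn, hxC, fun hker => hχx ?_⟩
  exact (Subgroup.mem_map_iff_mem C.subtype_injective (x := ⟨x ^ n, hxC⟩)).mp hker

/-- If a finite `p`-group `H` has a nonzero finite-dimensional complex representation
in which every element fixing a nonzero vector lies in the proper normal subgroup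
`H*`, then there is a cyclic section `C/E` of `H` such that every element of
`H \ H*` has a power in `C \ E`. -/
theorem stmt_11 {p : ℕ} (hp : p.Prime) {H : Type*} [Group H] [Finite H]
    (hpH : IsPGroup p H) (Hstar : Subgroup H) [Hstar.Normal] (hlt : Hstar ≠ ⊤)
    (M : Type*) [AddCommGroup M] [Module ℂ M] [FiniteDimensional ℂ M] [Nontrivial M]
    (ρ : Representation ℂ H M)
    (hfix : ∀ h : H, (∃ v : M, v ≠ 0 ∧ ρ h v = v) → h ∈ Hstar) :
    ∃ C : Subgroup H, ∃ E : Subgroup H, E ≤ C ∧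
      ∃ hn : (E.subgroupOf C).Normal,
        (letI := hn; IsCyclic (C ⧸ E.subgroupOf C)) ∧
        ∀ x : H, x ∉ Hstar → ∃ n : ℕ, 0 < n ∧ x ^ n ∈ C ∧ x ^ n ∉ E :=
  stmt_11_general hp hpH Hstar M ρ hfix
end

section
/- Let H be a finite p-group and H* a proper normal subgroup of H. If there exist a subgroup C of H and a normal subgroup E of C with C/E cyclic such that every element x ∈ H \ H* has a power x^n lying in C \ E, then there exists a nonzero finite-dimensional complex representation M of H such that every element of H fixing some nonzero vector of M lies in H*. -/
/-- Conversely, if a finite `p`-group `H` has a cyclic section `C/E` such that every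
element of `H \ H*` has a power in `C \ E`, then there is a nonzero
finite-dimensional complex representation of `H` in which every element fixing a
nonzero vector lies in `H*`. -/
theorem stmt_12 {p : ℕ} (hp : p.Prime) {H : Type} [Group H] [Finite H]
    (hpH : IsPGroup p H) (Hstar : Subgroup H) [Hstar.Normal] (hlt : Hstar ≠ ⊤)
    (C E : Subgroup H) (hEC : E ≤ C) (hnorm : (E.subgroupOf C).Normal)
    (hcyc : letI := hnorm; IsCyclic (C ⧸ E.subgroupOf C))
    (hpow : ∀ x : H, x ∉ Hstar → ∃ n : ℕ, 0 < n ∧ x ^ n ∈ C ∧ x ^ n ∉ E) :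
    ∃ V : FDRep ℂ H, Nontrivial V ∧
      ∀ h : H, (∃ v : V, v ≠ 0 ∧ V.ρ h v = v) → h ∈ Hstar := by
  classical
  letI : Fintype H := Fintype.ofFinite H
  letI := hnorm
  haveI hcyc' : IsCyclic (C ⧸ E.subgroupOf C) := hcyc
  set Q := C ⧸ E.subgroupOf C with hQ
  haveI : Finite Q := Quotient.finite _
  set d := Nat.card Q with hd
  haveI : NeZero d := ⟨Nat.card_pos.ne'⟩
  have hcard : Nat.card Q = Nat.card (rootsOfUnity d ℂ) :=
    (HasEnoughRootsOfUnity.natCard_rootsOfUnity ℂ d).symm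
  let e : Q ≃* rootsOfUnity d ℂ := mulEquivOfCyclicCardEq hcard
  -- the character μ : C →* ℂˣ with kernel E
  let μ : C →* ℂˣ :=
    ((rootsOfUnity d ℂ).subtype.comp e.toMonoidHom).comp
      (QuotientGroup.mk' (E.subgroupOf C))
  have hker : ∀ c : C, μ c = 1 → (c : H) ∈ E := by
    intro c hc
    have h1 : (e (QuotientGroup.mk' (E.subgroupOf C) c) : ℂˣ) = 1 := hc
    have h2 : e (QuotientGroup.mk' (E.subgroupOf C) c) = 1 := by
      exact Subtype.ext h1
    have h3 : QuotientGroup.mk' (E.subgroupOf C) c = 1 := by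
      apply e.injective
      rw [h2, map_one]
    have h4 : c ∈ E.subgroupOf C := (QuotientGroup.eq_one_iff c).mp h3
    exact h4
  -- the space of equivariant functions
  let W : Submodule ℂ (H → ℂ) :=
    { carrier := {f | ∀ (x : H) (c : C), f (x * c) = (μ c : ℂ) * f x}
      add_mem' := by
        intro f g hf hg x c
        simp only [Pi.add_apply, hf x c, hg x c, mul_add]
      zero_mem' := by intro x c; simp
      smul_mem' := by
        intro a f hf x c
        simp only [Pi.smul_apply, hf x c, smul_eq_mul]
        ring }
  -- the representation on the full space, by left translation
  let L : H → (H → ℂ) →ₗ[ℂ] (H → ℂ) := fun h =>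
    { toFun := fun f x => f (h⁻¹ * x)
      map_add' := fun _ _ => rfl
      map_smul' := fun _ _ => rfl }
  have hL : ∀ (h : H) (f : H → ℂ), f ∈ W → L h f ∈ W := by
    intro h f hf x c
    show f (h⁻¹ * (x * c)) = (μ c : ℂ) * f (h⁻¹ * x)
    rw [← mul_assoc, hf (h⁻¹ * x) c]
  let ρ : Representation ℂ H W :=
    { toFun := fun h => (L h).restrict (hL h)
      map_one' := by
        apply LinearMap.ext; intro f
        apply Subtype.ext
        funext x
        show (f : H → ℂ) (1⁻¹ * x) = (f : H → ℂ) x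
        rw [inv_one, one_mul]
      map_mul' := by
        intro g h
        apply LinearMap.ext; intro f
        apply Subtype.ext
        funext x
        show (f : H → ℂ) ((g * h)⁻¹ * x) = (f : H → ℂ) (h⁻¹ * (g⁻¹ * x))
        rw [mul_inv_rev, mul_assoc] }
  refine ⟨FDRep.of ρ, ?_, ?_⟩
  · -- nontriviality: the function supported on C given by μ is a nonzero element of W
    let f₀ : H → ℂ := fun x => if hx : x ∈ C then (μ ⟨x, hx⟩ : ℂ) else 0
    have hf₀ : f₀ ∈ W := by
      intro x c
      by_cases hx : x ∈ C
      · have hxc : x * c ∈ C := C.mul_mem hx c.2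
        have : (⟨x * c, hxc⟩ : C) = ⟨x, hx⟩ * c := rfl
        simp only [f₀, dif_pos hx, dif_pos hxc, this, map_mul, Units.val_mul]
        ring
      · have hxc : x * (c : H) ∉ C := by
          intro hmem
          exact hx (by simpa using C.mul_mem hmem (C.inv_mem c.2))
        simp [f₀, dif_neg hx, dif_neg hxc]
    have hf₀ne : f₀ ≠ 0 := by
      intro h0
      have h1 : f₀ 1 = 0 := by rw [h0]; rfl
      have : f₀ 1 = 1 := by
        simp only [f₀, dif_pos C.one_mem]
        have : (⟨(1 : H), C.one_mem⟩ : C) = 1 := rfl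
        rw [this, map_one, Units.val_one]
      rw [this] at h1
      exact one_ne_zero h1
    exact ⟨(⟨f₀, hf₀⟩ : W), 0, fun hcon => hf₀ne (congrArg Subtype.val hcon)⟩
  · -- every element with a nonzero fixed vector lies in Hstar
    rintro h ⟨v, hv0, hfix⟩
    by_contra hnot
    let w : W := v
    have hw0 : w ≠ 0 := hv0
    have hwfix : ρ h w = w := hfix
    -- v is a fixed equivariant function
    have hstep : ∀ x : H, (w : H → ℂ) (h⁻¹ * x) = (w : H → ℂ) x := by
      intro x
      have := congrArg Subtype.val hwfix
      exact congrFun this x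
    have key : ∀ (k : ℕ) (x : H), (w : H → ℂ) (h⁻¹ ^ k * x) = (w : H → ℂ) x := by
      intro k
      induction k with
      | zero => intro x; rw [pow_zero, one_mul]
      | succ k ih =>
        intro x
        have h1 : h⁻¹ ^ (k + 1) * x = h⁻¹ ^ k * (h⁻¹ * x) := by
          rw [pow_succ, mul_assoc]
        rw [h1, ih, hstep]
    -- pick a point where v is nonzero
    have hvne : (w : H → ℂ) ≠ 0 := fun hcon => hw0 (Subtype.ext hcon)
    obtain ⟨x₀, hx₀⟩ : ∃ x₀ : H, (w : H → ℂ) x₀ ≠ 0 := by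
      by_contra hcon
      push_neg at hcon
      exact hvne (funext hcon)
    -- the conjugate of h is not in Hstar
    set h' := x₀⁻¹ * h * x₀ with hh'
    have hh'not : h' ∉ Hstar := by
      intro hmem
      apply hnot
      have := Subgroup.Normal.conj_mem ‹Hstar.Normal› h' hmem x₀
      simpa [hh', mul_assoc] using this
    obtain ⟨n, hn, hC, hE⟩ := hpow h' hh'not
    -- h'^n = x₀⁻¹ * h^n * x₀
    have hconj : h' ^ n = x₀⁻¹ * h ^ n * x₀ := by
      have := conj_pow (a := x₀⁻¹) (b := h) (i := n)
      simpa using this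
    -- translate the fixed-point identity into the equivariance relation
    let c : C := (⟨h' ^ n, hC⟩ : C)⁻¹
    have hxc : x₀ * (c : H) = h⁻¹ ^ n * x₀ := by
      show x₀ * (h' ^ n)⁻¹ = h⁻¹ ^ n * x₀
      rw [hconj, inv_pow]
      group
    have hv1 : (w : H → ℂ) (x₀ * (c : H)) = (μ c : ℂ) * (w : H → ℂ) x₀ := w.2 x₀ c
    have hv2 : (w : H → ℂ) (x₀ * (c : H)) = (w : H → ℂ) x₀ := by
      rw [hxc]; exact key n x₀
    have hμ1 : (μ c : ℂ) = 1 := by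
      have h1 : (μ c : ℂ) * (w : H → ℂ) x₀ = 1 * (w : H → ℂ) x₀ := by
        rw [hv1.symm.trans hv2, one_mul]
      exact mul_right_cancel₀ hx₀ h1
    have hμc : μ c = 1 := Units.ext hμ1
    have hμc' : μ (⟨h' ^ n, hC⟩ : C) = 1 := by
      have : μ c = (μ (⟨h' ^ n, hC⟩ : C))⁻¹ := map_inv μ _
      rw [hμc] at this
      rw [← inv_inv (μ _), ← this, inv_one]
    exact hE (hker _ hμc')
end

section
/- Let L be a finite group acting by automorphisms on a nontrivial finite group Q, and let M be a proper normal subgroup of L such that every element of L \ M acts fixed-point-freely on Q (i.e., for l ∈ L \ M and q ∈ Q with q ≠ 1, l·q ≠ q). Then in the semidirect product G = Q ⋊ L, the image H of L satisfies H ∩ H^g ≤ H* for all g ∈ G \ H, where H* is the image of M; that is, G is a Frobenius–Wielandt group with FW complement isomorphic to L/M. -/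
open Pointwise

/-!
Write `g = (q, r)`. Then `g⁻¹ (1, m) g` has `Q`-coordinate `φ r⁻¹ (q⁻¹ · φ m q)`, so it lies
in `H` only when `m` fixes `q`. For `g ∉ H` we have `q ≠ 1`, hence `m ∈ M`, and the conjugate
is `(1, r⁻¹ m r) ∈ H*` by normality of `M`.
-/

namespace SemidirectProduct

variable {N G : Type*} [Group N] [Group G] {φ : G →* MulAut N}

theorem mem_range_inr_iff {x : N ⋊[φ] G} : x ∈ (inr : G →* N ⋊[φ] G).range ↔ x.left = 1 :=
  ⟨by rintro ⟨g, rfl⟩; rfl, fun h => ⟨x.right, by ext <;> simp [h]⟩⟩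

theorem mem_map_inr_iff {K : Subgroup G} {x : N ⋊[φ] G} :
    x ∈ K.map (inr : G →* N ⋊[φ] G) ↔ x.left = 1 ∧ x.right ∈ K :=
  ⟨by rintro ⟨g, hg, rfl⟩; exact ⟨rfl, hg⟩,
    fun ⟨h, hK⟩ => ⟨x.right, hK, by ext <;> simp [h]⟩⟩

theorem inv_mul_inr_mul_mem_range_inr_iff (g : N ⋊[φ] G) (l : G) :
    g⁻¹ * inr l * g ∈ (inr : G →* N ⋊[φ] G).range ↔ φ l g.left = g.left := by
  have hleft : (g⁻¹ * inr l * g).left = φ g.right⁻¹ (g.left⁻¹ * φ l g.left) := by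
    simp only [mul_left, mul_right, inv_left, inv_right, left_inr, right_inr, map_one, mul_one,
      map_mul, MulAut.mul_apply]
  rw [mem_range_inr_iff, hleft, map_eq_one_iff _ (MulEquiv.injective _), inv_mul_eq_one, eq_comm]

end SemidirectProduct

theorem stmt_15_general {L Q : Type*} [Group L] [Group Q]
    (φ : L →* MulAut Q) (M : Subgroup L) [M.Normal]
    (hfpf : ∀ l : L, l ∉ M → ∀ q : Q, q ≠ 1 → φ l q ≠ q) :
    ∀ g : Q ⋊[φ] L, g ∉ (SemidirectProduct.inr : L →* Q ⋊[φ] L).range →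
      (SemidirectProduct.inr : L →* Q ⋊[φ] L).range ⊓
          MulAut.conj g⁻¹ • (SemidirectProduct.inr : L →* Q ⋊[φ] L).range ≤
        M.map (SemidirectProduct.inr : L →* Q ⋊[φ] L) := by
  rintro g hg x ⟨hxH, hxconj⟩
  obtain ⟨_, ⟨m, rfl⟩, rfl⟩ := (Subgroup.mem_smul_pointwise_iff_exists _ _ _).1 hxconj
  simp only [MulAut.smul_def, MulAut.conj_apply, inv_inv] at hxH ⊢
  have hm : m ∈ M := by
    by_contra hm
    exact hfpf m hm g.left (mt SemidirectProduct.mem_range_inr_iff.2 hg)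
      ((SemidirectProduct.inv_mul_inr_mul_mem_range_inr_iff g m).1 hxH)
  refine SemidirectProduct.mem_map_inr_iff.2
    ⟨SemidirectProduct.mem_range_inr_iff.1 hxH, ?_⟩
  simpa [mul_assoc] using Subgroup.Normal.conj_mem ‹_› m hm g.right⁻¹

/-- If `L` acts on a nontrivial finite group `Q` so that every element of `L \ M`
acts fixed-point-freely, then in `G = Q ⋊ L` the canonical copy `H` of `L`
satisfies `H ∩ H^g ≤ H*` for all `g ∉ H`, where `H*` is the copy of `M`. -/
theorem stmt_15 {L Q : Type*} [Group L] [Finite L] [Group Q] [Finite Q] [Nontrivial Q]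
    (φ : L →* MulAut Q) (M : Subgroup L) [M.Normal] (hM : M ≠ ⊤)
    (hfpf : ∀ l : L, l ∉ M → ∀ q : Q, q ≠ 1 → φ l q ≠ q) :
    ∀ g : Q ⋊[φ] L, g ∉ (SemidirectProduct.inr : L →* Q ⋊[φ] L).range →
      (SemidirectProduct.inr : L →* Q ⋊[φ] L).range ⊓
          MulAut.conj g⁻¹ • (SemidirectProduct.inr : L →* Q ⋊[φ] L).range ≤
        M.map (SemidirectProduct.inr : L →* Q ⋊[φ] L) :=
  stmt_15_general φ M hfpf
end

section
/- Let G be a finite group acting faithfully and transitively on a finite set Ω of size n > 1, and let D be the subgroup of G generated by the derangements. Then the index |G : D| is at most n − 1. -/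
/-!
Derangements form a conjugation-invariant set, so `D` is normal, and every element outside `D`
fixes a point. Burnside's lemma for the transitive group `G` gives `∑_g |fix g| = |G|`, and for
`D` it gives `∑_{d ∈ D} |fix d| = k |D|` with `k` the number of `D`-orbits. Since each of the
`|G| - |D|` elements outside `D` contributes at least `1`, we get `k = 1` and each of them fixes
exactly one point. Thus `D` is transitive, so `G = D G_α`, and `G_α ∩ G_β ≤ D` for `α ≠ β`,
whence `|G : D| = |G_α : G_α ∩ D| ≤ |G_α : G_αβ| = |β ^ G_α| ≤ n - 1`, as `α ∉ β ^ G_α`.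
-/

open MulAction Subgroup

namespace MulAction

variable (G Ω : Type*) [Group G] [MulAction G Ω]

def derangements : Set G := {g | ∀ α : Ω, g • α ≠ α}

variable {G Ω}

theorem conj_mem_derangements {g : G} (hg : g ∈ derangements G Ω) (c : G) :
    c * g * c⁻¹ ∈ derangements G Ω := fun α hα ↦
  hg (c⁻¹ • α) <| by
    rwa [← mem_fixedBy, ← Set.mem_smul_set_iff_inv_smul_mem, smul_fixedBy]

instance normal_closure_derangements : (closure (derangements G Ω)).Normal := by
  have hconj : Group.conjugatesOfSet (derangements G Ω) = derangements G Ω := by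
    refine Set.Subset.antisymm ?_ Group.subset_conjugatesOfSet
    intro g hg
    obtain ⟨x, hx, hconj⟩ := Group.mem_conjugatesOfSet_iff.mp hg
    obtain ⟨c, rfl⟩ := isConj_iff.mp hconj
    exact conj_mem_derangements hx c
  rw [← hconj]
  exact normalClosure_normal

theorem nonempty_fixedBy_of_notMem_closure_derangements {g : G}
    (hg : g ∉ closure (derangements G Ω)) : (fixedBy Ω g).Nonempty := by
  by_contra! h
  exact hg (subset_closure fun α hα ↦ h.subset hα)

theorem sup_stabilizer_eq_top (H : Subgroup G) [IsPretransitive H Ω] (α : Ω) :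
    H ⊔ stabilizer G α = ⊤ := by
  refine eq_top_iff.mpr fun g _ ↦ ?_
  obtain ⟨h, hh : (h : G) • α = g • α⟩ := exists_smul_eq H α (g • α)
  have hstab : (h : G)⁻¹ * g ∈ stabilizer G α := by
    rw [mem_stabilizer_iff, mul_smul, ← hh, inv_smul_smul]
  simpa using mul_mem_sup h.2 hstab

theorem relIndex_stabilizer (K : Subgroup G) (x : Ω) :
    (stabilizer G x).relIndex K = (orbit K x).ncard := by
  rw [← index_stabilizer]
  rfl

theorem notMem_orbit_stabilizer {α β : Ω} (hαβ : α ≠ β) : α ∉ orbit (stabilizer G α) β := by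
  rintro ⟨g, hg⟩
  exact hαβ (smul_left_cancel (g : G) (g.2.trans hg.symm))

theorem index_le_natCard_sub_one [Finite Ω] (H : Subgroup G) [H.Normal] [IsPretransitive H Ω]
    {α β : Ω} (hαβ : α ≠ β) (hH : stabilizer G α ⊓ stabilizer G β ≤ H) :
    H.index ≤ Nat.card Ω - 1 := by
  have horbit : (stabilizer G β).relIndex (stabilizer G α) < Nat.card Ω := by
    rw [relIndex_stabilizer, ← Set.ncard_univ]
    exact Set.ncard_lt_ncard (Set.ssubset_univ_iff.mpr fun h ↦
      notMem_orbit_stabilizer hαβ (h ▸ Set.mem_univ α))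
  have hne : (stabilizer G α ⊓ stabilizer G β).relIndex (stabilizer G α) ≠ 0 := by
    rw [inf_relIndex_left, relIndex_stabilizer]
    exact (Set.ncard_pos (Set.toFinite _)).mpr (nonempty_orbit β) |>.ne'
  calc H.index = H.relIndex (stabilizer G α) := by
        rw [← relIndex_top_right, ← sup_stabilizer_eq_top H α, relIndex_sup_left]
    _ ≤ (stabilizer G α ⊓ stabilizer G β).relIndex (stabilizer G α) :=
        relIndex_le_of_le_left hH hne
    _ = (stabilizer G β).relIndex (stabilizer G α) := inf_relIndex_left _ _
    _ ≤ Nat.card Ω - 1 := Nat.le_sub_one_of_lt horbit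

theorem natCard_orbitRel_quotient_eq_one [IsPretransitive G Ω] [Nonempty Ω] :
    Nat.card (orbitRel.Quotient G Ω) = 1 :=
  have := ((pretransitive_iff_unique_quotient_of_nonempty G Ω).mp inferInstance).some
  Nat.card_unique

section Counting

variable [Fintype G] [Finite Ω] {H : Subgroup G}

theorem sum_natCard_fixedBy_eq_natCard_orbits_mul_natCard :
    ∑ g : G, Nat.card (fixedBy Ω g) = Nat.card (orbitRel.Quotient G Ω) * Nat.card G := by
  classical
  cases nonempty_fintype Ω
  simp only [Nat.card_eq_fintype_card]
  convert sum_card_fixedBy_eq_card_orbits_mul_card_group G Ω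

theorem natCard_compl_le_sum_natCard_fixedBy [DecidablePred (· ∈ H)]
    (hfix : ∀ g ∉ H, (fixedBy Ω g).Nonempty) :
    Nat.card {g // g ∉ H} ≤ ∑ g : {g // g ∉ H}, Nat.card (fixedBy Ω (g : G)) := by
  rw [Nat.card_eq_fintype_card, Fintype.card_eq_sum_ones]
  exact Finset.sum_le_sum fun g _ ↦ (hfix g g.2).natCard_pos (Set.toFinite _)

variable [IsPretransitive G Ω] [Nonempty Ω]

variable (H) in
theorem sum_natCard_fixedBy_compl_add_eq [DecidablePred (· ∈ H)] :
    ∑ g : {g // g ∉ H}, Nat.card (fixedBy Ω (g : G)) +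
        Nat.card (orbitRel.Quotient H Ω) * Nat.card H =
      Nat.card H + Nat.card {g // g ∉ H} := by
  rw [← sum_natCard_fixedBy_eq_natCard_orbits_mul_natCard, add_comm, ← Nat.card_sum,
    Nat.card_congr (Equiv.sumCompl (· ∈ H)), ← one_mul (Nat.card G),
    ← natCard_orbitRel_quotient_eq_one (G := G) (Ω := Ω),
    ← sum_natCard_fixedBy_eq_natCard_orbits_mul_natCard]
  exact Fintype.sum_subtype_add_sum_subtype (· ∈ H) fun g ↦ Nat.card (fixedBy Ω g)

theorem isPretransitive_of_forall_notMem_nonempty_fixedBy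
    (hfix : ∀ g ∉ H, (fixedBy Ω g).Nonempty) : IsPretransitive H Ω := by
  classical
  have hsum := sum_natCard_fixedBy_compl_add_eq (Ω := Ω) H
  have hle := natCard_compl_le_sum_natCard_fixedBy hfix
  have hk : Nat.card (orbitRel.Quotient H Ω) ≤ 1 :=
    Nat.le_of_mul_le_mul_right (by omega : _ * Nat.card H ≤ 1 * Nat.card H) Nat.card_pos
  exact (pretransitive_iff_subsingleton_quotient H Ω).mpr
    (Finite.card_le_one_iff_subsingleton.mp hk)

theorem natCard_fixedBy_eq_one_of_notMem (hfix : ∀ g ∉ H, (fixedBy Ω g).Nonempty) {g : G}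
    (hg : g ∉ H) : Nat.card (fixedBy Ω g) = 1 := by
  classical
  have := isPretransitive_of_forall_notMem_nonempty_fixedBy hfix
  have hsum := sum_natCard_fixedBy_compl_add_eq (Ω := Ω) H
  rw [natCard_orbitRel_quotient_eq_one (G := H), one_mul] at hsum
  have heq : ∑ _ : {g // g ∉ H}, 1 = ∑ g : {g // g ∉ H}, Nat.card (fixedBy Ω (g : G)) := by
    rw [← Fintype.card_eq_sum_ones, ← Nat.card_eq_fintype_card]
    omega
  exact ((Finset.sum_eq_sum_iff_of_le fun (x : {g // g ∉ H}) _ ↦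
    (hfix x x.2).natCard_pos (Set.toFinite _)).mp heq ⟨g, hg⟩ (Finset.mem_univ _)).symm

theorem inf_stabilizer_le_of_forall_notMem_nonempty_fixedBy
    (hfix : ∀ g ∉ H, (fixedBy Ω g).Nonempty) {α β : Ω} (hαβ : α ≠ β) :
    stabilizer G α ⊓ stabilizer G β ≤ H := fun g hg ↦ by
  by_contra hgH
  have := Finite.card_le_one_iff_subsingleton.mp (natCard_fixedBy_eq_one_of_notMem hfix hgH).le
  exact hαβ (congrArg Subtype.val (Subsingleton.elim (⟨α, hg.1⟩ : fixedBy Ω g) ⟨β, hg.2⟩))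

end Counting

end MulAction

theorem stmt_18_general {G Ω : Type*} [Group G] [Finite G] [Finite Ω] [Nontrivial Ω]
    [MulAction G Ω] [MulAction.IsPretransitive G Ω] :
    (Subgroup.closure {g : G | ∀ α : Ω, g • α ≠ α}).index ≤ Nat.card Ω - 1 := by
  show (closure (derangements G Ω)).index ≤ _
  cases nonempty_fintype G
  have hfix : ∀ g ∉ closure (derangements G Ω), (fixedBy Ω g).Nonempty :=
    fun _ ↦ nonempty_fixedBy_of_notMem_closure_derangements
  have := isPretransitive_of_forall_notMem_nonempty_fixedBy hfix
  obtain ⟨α, β, hαβ⟩ := exists_pair_ne Ω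
  exact index_le_natCard_sub_one _ hαβ
    (inf_stabilizer_le_of_forall_notMem_nonempty_fixedBy hfix hαβ)

/-- The index of the derangements subgroup `D` in a finite faithful transitive
permutation group of degree `n > 1` is at most `n - 1`. -/
theorem stmt_18 {G Ω : Type*} [Group G] [Finite G] [Finite Ω] [Nontrivial Ω]
    [MulAction G Ω] [FaithfulSMul G Ω] [MulAction.IsPretransitive G Ω] :
    (Subgroup.closure {g : G | ∀ α : Ω, g • α ≠ α}).index ≤ Nat.card Ω - 1 :=
  stmt_18_general
end
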